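/- For every h ∈ (−1/4, 0), the interior Abelian integral I₄ satisfies the reduction identity I₄(h) = (4h/7)·I₀(h) + (8/7)·I₂(h). -/

import Mathlib

open MeasureTheory

/-- Left endpoint `x₁(h) = √(1 − √(1+4h))` of the interior oval of the Duffing Hamiltonian
`H(x,y) = y²/2 − x²/2 + x⁴/4`. -/
noncomputable def x1 (h : ℝ) : ℝ := Real.sqrt (1 - Real.sqrt (1 + 4*h))
/-- Right endpoint `x₂(h) = √(1 + √(1+4h))` of the interior oval. -/
noncomputable def x2 (h : ℝ) : ℝ := Real.sqrt (1 + Real.sqrt (1 + 4*h))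
/-- The interior Abelian integrals `I_i(h) = 2∫_{x₁(h)}^{x₂(h)} xⁱ √(2h + x² − x⁴/2) dx`. -/
noncomputable def Iint (i : ℕ) (h : ℝ) : ℝ :=
  2 * ∫ x in x1 h..x2 h, x ^ i * Real.sqrt (2*h + x^2 - x^4/2)

theorem I4_reduction_interior (h : ℝ) (hh : h ∈ Set.Ioo (-(1:ℝ)/4) 0) :
    Iint 4 h = (4*h/7) * Iint 0 h + (8/7) * Iint 2 h := by
  obtain ⟨h1, h2⟩ := hh
  set s := Real.sqrt (1 + 4*h) with hs_def
  have hs0 : (0:ℝ) < 1 + 4*h := by linarith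
  have hs_pos : 0 < s := Real.sqrt_pos.2 hs0
  have hs_lt : s < 1 := by
    calc s < Real.sqrt 1 := Real.sqrt_lt_sqrt hs0.le (by linarith)
    _ = 1 := Real.sqrt_one
  have hs_sq : s^2 = 1 + 4*h := Real.sq_sqrt hs0.le
  have hx1sq : (x1 h)^2 = 1 - s := Real.sq_sqrt (by linarith)
  have hx2sq : (x2 h)^2 = 1 + s := Real.sq_sqrt (by linarith)
  have hx1pos : 0 < x1 h := Real.sqrt_pos.2 (by linarith)
  have hx2pos : 0 < x2 h := Real.sqrt_pos.2 (by linarith)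
  have hx12 : x1 h < x2 h := by
    unfold x1 x2; exact Real.sqrt_lt_sqrt (by linarith) (by linarith)
  set f : ℝ → ℝ := fun x => 2*h + x^2 - x^4/2 with hf_def
  have hf_fact : ∀ x : ℝ, f x = (x^2 - (1-s)) * ((1+s) - x^2) / 2 := by
    intro x
    simp only [hf_def]
    linear_combination (-(1:ℝ)/2) * hs_sq
  have hf1 : f (x1 h) = 0 := by rw [hf_fact, hx1sq]; ring
  have hf2 : f (x2 h) = 0 := by rw [hf_fact, hx2sq]; ring
  have hfpos : ∀ x ∈ Set.Ioo (x1 h) (x2 h), 0 < f x := by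
    intro x hx
    rw [hf_fact]
    have h1' : x1 h < x := hx.1
    have h2' : x < x2 h := hx.2
    have hxpos : 0 < x := lt_trans hx1pos h1'
    have hA : 1 - s < x^2 := by nlinarith [hx1sq]
    have hB : x^2 < 1 + s := by nlinarith [hx2sq]
    exact div_pos (mul_pos (by linarith) (by linarith)) two_pos
  -- the antiderivative
  set F : ℝ → ℝ := fun x => x * (f x * Real.sqrt (f x)) with hF_def
  set g : ℝ → ℝ := fun x => (2*h + 4*x^2 - 7/2*x^4) * Real.sqrt (f x) with hg_def
  have hcont_f : Continuous f := by fun_prop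
  have hcont_sqrt : Continuous (fun x => Real.sqrt (f x)) :=
    Real.continuous_sqrt.comp hcont_f
  have hFderiv : ∀ x ∈ Set.Ioo (x1 h) (x2 h), HasDerivAt F (g x) x := by
    intro x hx
    have hpos := hfpos x hx
    have hne : Real.sqrt (f x) ≠ 0 := ne_of_gt (Real.sqrt_pos.2 hpos)
    have hself : Real.sqrt (f x) * Real.sqrt (f x) = f x := Real.mul_self_sqrt hpos.le
    have hdf : HasDerivAt f (2*x - 2*x^3) x := by
      have h' := (((hasDerivAt_pow 2 x).const_add (2*h)).sub ((hasDerivAt_pow 4 x).div_const 2))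
      exact h'.congr_deriv (by push_cast; ring)
    have hdsqrt : HasDerivAt (fun y => Real.sqrt (f y))
        (1 / (2 * Real.sqrt (f x)) * (2*x - 2*x^3)) x :=
      (Real.hasDerivAt_sqrt (ne_of_gt hpos)).comp x hdf
    have hdprod : HasDerivAt (fun y => f y * Real.sqrt (f y))
        ((2*x - 2*x^3) * Real.sqrt (f x)
          + f x * (1 / (2 * Real.sqrt (f x)) * (2*x - 2*x^3))) x :=
      hdf.mul hdsqrt
    have hdF := (hasDerivAt_id x).mul hdprod
    refine HasDerivAt.congr_deriv (f := F) hdF ?_; symm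
    simp only [hg_def, id]
    have e : f x * (1 / (2 * Real.sqrt (f x))) = Real.sqrt (f x) / 2 := by
      calc f x * (1 / (2 * Real.sqrt (f x)))
          = (Real.sqrt (f x) * Real.sqrt (f x)) * (1 / (2 * Real.sqrt (f x))) := by rw [hself]
        _ = Real.sqrt (f x) / 2 := by field_simp
    rw [← mul_assoc (f x), e]
    simp only [hf_def] at hself ⊢
    ring
  have hcontF : ContinuousOn F (Set.Icc (x1 h) (x2 h)) :=
    (continuous_id.mul (hcont_f.mul hcont_sqrt)).continuousOn
  have hintg : IntervalIntegrable g volume (x1 h) (x2 h) :=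
    (Continuous.mul (by fun_prop) hcont_sqrt).intervalIntegrable _ _
  have hFTC : (∫ x in x1 h..x2 h, g x) = F (x2 h) - F (x1 h) :=
    intervalIntegral.integral_eq_sub_of_hasDerivAt_of_le hx12.le hcontF hFderiv hintg
  have hFzero : (∫ x in x1 h..x2 h, g x) = 0 := by
    rw [hFTC]; simp [hF_def, hf1, hf2]
  -- split the integral
  have hint0 : IntervalIntegrable (fun x => x^0 * Real.sqrt (f x)) volume (x1 h) (x2 h) :=
    (Continuous.mul (by fun_prop) hcont_sqrt).intervalIntegrable _ _
  have hint2 : IntervalIntegrable (fun x => x^2 * Real.sqrt (f x)) volume (x1 h) (x2 h) :=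
    (Continuous.mul (by fun_prop) hcont_sqrt).intervalIntegrable _ _
  have hint4 : IntervalIntegrable (fun x => x^4 * Real.sqrt (f x)) volume (x1 h) (x2 h) :=
    (Continuous.mul (by fun_prop) hcont_sqrt).intervalIntegrable _ _
  have hsplit : (∫ x in x1 h..x2 h, g x)
      = 2*h * (∫ x in x1 h..x2 h, x^0 * Real.sqrt (f x))
        + 4 * (∫ x in x1 h..x2 h, x^2 * Real.sqrt (f x))
        - 7/2 * (∫ x in x1 h..x2 h, x^4 * Real.sqrt (f x)) := by
    rw [← intervalIntegral.integral_const_mul, ← intervalIntegral.integral_const_mul,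
        ← intervalIntegral.integral_const_mul,
        ← intervalIntegral.integral_add (hint0.const_mul _) (hint2.const_mul _),
        ← intervalIntegral.integral_sub ((hint0.const_mul _).add (hint2.const_mul _))
          (hint4.const_mul _)]
    congr 1; funext x; simp [hg_def]; ring
  simp only [Iint, hf_def] at *
  rw [hFzero] at hsplit
  linarith
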